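/- Let K be a square of side 2h, u ∈ P₄(K), v ∈ P_T(K) = P₂ + span{x₁³,x₂³}, and Π_K the rectangular Morley interpolation on K. Then the Hessian inner product satisfies ∫_K ∇²(u-Π_K u) : ∇²v dx₁dx₂ = (h²/3)[∫_K (∂³u/∂x₁∂x₂²)(∂³v/∂x₁³) dx + ∫_K (∂³u/∂x₁²∂x₂)(∂³v/∂x₂³) dx]. -/

import Mathlib

open MeasureTheory Set

noncomputable def pd1 (f : ℝ → ℝ → ℝ) : ℝ → ℝ → ℝ := fun x y => deriv (fun t => f t y) x
noncomputable def pd2 (f : ℝ → ℝ → ℝ) : ℝ → ℝ → ℝ := fun x y => deriv (fun t => f x t) y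

/-- Membership in P₄(ℝ²): bivariate polynomials of total degree ≤ 4. -/
def MemP4 (u : ℝ → ℝ → ℝ) : Prop :=
  ∃ c : Fin 5 → Fin 5 → ℝ, (∀ i j : Fin 5, 4 < i.1 + j.1 → c i j = 0) ∧
    ∀ x y : ℝ, u x y = ∑ i : Fin 5, ∑ j : Fin 5, c i j * x ^ (i : ℕ) * y ^ (j : ℕ)

/-- Membership in the 2D rectangular Morley shape space
P_T = P₂(ℝ²) + span{x₁³, x₂³}. -/
def MemPT2 (v : ℝ → ℝ → ℝ) : Prop :=
  ∃ a₀ a₁ a₂ a₃ a₄ a₅ b₁ b₂ : ℝ, ∀ x y : ℝ,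
    v x y = a₀ + a₁ * x + a₂ * y + a₃ * x ^ 2 + a₄ * x * y + a₅ * y ^ 2
      + b₁ * x ^ 3 + b₂ * y ^ 3

/-!
Write `w = u - Π_K u` and `K = [a, b] × [c, d]`. For `v ∈ P_T` the mixed second derivatives are
one constant and `∂₁₁v`, `∂₂₂v` are affine in `x₁`, resp. `x₂`, so the mixed terms of
`∫_K ∇²w : ∇²v` integrate to alternating sums of vertex values of `w`, which vanish.
Integrating `∫_K ∂₁₁w ∂₁₁v` by parts in `x₁`, the boundary terms vanish by the edge conditions,
leaving `-∂₁₁₁v ∫_c^d ψ` with `ψ = w(b, ·) - w(a, ·)`. Since the `x₂⁴`-coefficient of `u` does not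
depend on `x₁`, `ψ` is a cubic vanishing at `c` and `d`, so the corrected trapezoidal rule, exact
on cubics, gives `∫_c^d ψ = -(h²/3) (ψ'(d) - ψ'(c)) = -(h²/3) ∫_K ∂₁₂₂w`, and `∂₁₂₂w = ∂₁₂₂u`.
The `∂₂₂` term is the same computation with the variables exchanged.
-/

open Function intervalIntegral

lemma integral_Icc_eq_intervalIntegral {f : ℝ → ℝ} {a b : ℝ} (hab : a ≤ b) :
    ∫ x in Icc a b, f x = ∫ x in a..b, f x := by
  rw [integral_Icc_eq_integral_Ioc, integral_of_le hab]

section PartialDerivatives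

variable {f g : ℝ → ℝ → ℝ} {n : WithTop ℕ∞}

lemma ContDiff.uncurry_flip (hf : ContDiff ℝ n (uncurry f)) : ContDiff ℝ n (uncurry (flip f)) :=
  hf.comp (contDiff_snd.prodMk contDiff_fst)

lemma ContDiff.uncurry_right (y : ℝ) (hf : ContDiff ℝ n (uncurry f)) :
    ContDiff ℝ n fun x => f x y :=
  hf.comp (contDiff_id.prodMk contDiff_const)

lemma hasDerivAt_pd1 (hf : ContDiff ℝ 1 (uncurry f)) (x y : ℝ) :
    HasDerivAt (fun t => f t y) (pd1 f x y) x :=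
  ((hf.uncurry_right y).differentiable one_ne_zero x).hasDerivAt

lemma hasDerivAt_pd2 (hf : ContDiff ℝ 1 (uncurry f)) (x y : ℝ) :
    HasDerivAt (f x) (pd2 f x y) y :=
  hasDerivAt_pd1 hf.uncurry_flip y x

lemma uncurry_pd1_eq_fderiv (hf : ContDiff ℝ 1 (uncurry f)) :
    uncurry (pd1 f) = fun p => fderiv ℝ (uncurry f) p (1, 0) := by
  funext ⟨x, y⟩
  exact ((hf.differentiable one_ne_zero (x, y)).hasFDerivAt.comp_hasDerivAt x
    ((hasDerivAt_id x).prodMk (hasDerivAt_const x y))).deriv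

lemma ContDiff.uncurry_pd1 (hf : ContDiff ℝ (n + 1) (uncurry f)) :
    ContDiff ℝ n (uncurry (pd1 f)) := by
  rw [uncurry_pd1_eq_fderiv (hf.of_le le_add_self)]
  exact (hf.fderiv_right le_rfl).clm_apply contDiff_const

lemma ContDiff.uncurry_pd2 (hf : ContDiff ℝ (n + 1) (uncurry f)) :
    ContDiff ℝ n (uncurry (pd2 f)) :=
  hf.uncurry_flip.uncurry_pd1.uncurry_flip

lemma pd1_sub (hf : ContDiff ℝ 1 (uncurry f)) (hg : ContDiff ℝ 1 (uncurry g)) :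
    pd1 (fun x y => f x y - g x y) = fun x y => pd1 f x y - pd1 g x y :=
  funext₂ fun x y => ((hasDerivAt_pd1 hf x y).sub (hasDerivAt_pd1 hg x y)).deriv

lemma pd2_sub (hf : ContDiff ℝ 1 (uncurry f)) (hg : ContDiff ℝ 1 (uncurry g)) :
    pd2 (fun x y => f x y - g x y) = fun x y => pd2 f x y - pd2 g x y :=
  congrArg flip (pd1_sub hf.uncurry_flip hg.uncurry_flip)

lemma integral_pd1 (hf : ContDiff ℝ 1 (uncurry f)) (a b y : ℝ) :
    ∫ x in a..b, pd1 f x y = f b y - f a y :=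
  integral_eq_sub_of_hasDerivAt (fun x _ => hasDerivAt_pd1 hf x y)
    ((hf.uncurry_pd1 (n := 0)).continuous.uncurry_right y |>.intervalIntegrable a b)

lemma integral_pd2 (hf : ContDiff ℝ 1 (uncurry f)) (x c d : ℝ) :
    ∫ y in c..d, pd2 f x y = f x d - f x c :=
  integral_pd1 hf.uncurry_flip c d x

lemma integral_pd1_sub (hf : ContDiff ℝ 1 (uncurry f)) (hg : ContDiff ℝ 1 (uncurry g))
    (x c d : ℝ) :
    ∫ y in c..d, pd1 (fun x y => f x y - g x y) x y =
      (∫ y in c..d, pd1 f x y) - ∫ y in c..d, pd1 g x y := by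
  rw [pd1_sub hf hg]
  exact intervalIntegral.integral_sub
    ((hf.uncurry_pd1 (n := 0)).continuous.uncurry_left x |>.intervalIntegrable c d)
    ((hg.uncurry_pd1 (n := 0)).continuous.uncurry_left x |>.intervalIntegrable c d)

lemma integral_pd2_sub (hf : ContDiff ℝ 1 (uncurry f)) (hg : ContDiff ℝ 1 (uncurry g))
    (y a b : ℝ) :
    ∫ x in a..b, pd2 (fun x y => f x y - g x y) x y =
      (∫ x in a..b, pd2 f x y) - ∫ x in a..b, pd2 g x y :=
  integral_pd1_sub hf.uncurry_flip hg.uncurry_flip y a b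

end PartialDerivatives

section Rectangle

variable {F G f : ℝ → ℝ → ℝ} {a b c d : ℝ}

lemma integral_integral_swap_of_continuous (hF : Continuous fun p : ℝ × ℝ => F p.1 p.2) :
    ∫ x in a..b, ∫ y in c..d, F x y = ∫ y in c..d, ∫ x in a..b, F x y :=
  intervalIntegral_intervalIntegral_swap <|
    (hF.continuousOn.integrableOn_compact (isCompact_uIcc.prod isCompact_uIcc)).mono_set
      (prod_mono uIoc_subset_uIcc uIoc_subset_uIcc)

lemma integral_integral_add_of_continuous (hF : Continuous fun p : ℝ × ℝ => F p.1 p.2)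
    (hG : Continuous fun p : ℝ × ℝ => G p.1 p.2) :
    ∫ x in a..b, ∫ y in c..d, (F x y + G x y) =
      (∫ x in a..b, ∫ y in c..d, F x y) + ∫ x in a..b, ∫ y in c..d, G x y := by
  rw [← intervalIntegral.integral_add
    ((continuous_parametric_intervalIntegral_of_continuous' hF c d).intervalIntegrable a b)
    ((continuous_parametric_intervalIntegral_of_continuous' hG c d).intervalIntegrable a b)]
  exact intervalIntegral.integral_congr fun x _ => intervalIntegral.integral_add
    ((hF.uncurry_left x).intervalIntegrable c d) ((hG.uncurry_left x).intervalIntegrable c d)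

lemma integral_integral_pd2_pd1 (hf : ContDiff ℝ 2 (uncurry f)) (a b c d : ℝ) :
    ∫ x in a..b, ∫ y in c..d, pd2 (pd1 f) x y = (f b d - f a d) - (f b c - f a c) := by
  have hpd1 : ContDiff ℝ 1 (uncurry (pd1 f)) := hf.uncurry_pd1
  simp_rw [integral_pd2 hpd1]
  rw [intervalIntegral.integral_sub ((hpd1.continuous.uncurry_right d).intervalIntegrable a b)
    ((hpd1.continuous.uncurry_right c).intervalIntegrable a b),
    integral_pd1 (hf.of_le one_le_two), integral_pd1 (hf.of_le one_le_two)]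

lemma integral_integral_pd1_pd2 (hf : ContDiff ℝ 2 (uncurry f)) (a b c d : ℝ) :
    ∫ x in a..b, ∫ y in c..d, pd1 (pd2 f) x y = (f b d - f a d) - (f b c - f a c) := by
  rw [integral_integral_swap_of_continuous
    ((hf.uncurry_pd2 (n := 1)).uncurry_pd1 (n := 0)).continuous]
  exact (integral_integral_pd2_pd1 hf.uncurry_flip c d a b).trans (by simp only [flip]; ring)

end Rectangle

lemma integral_deriv_deriv_mul_affine {g : ℝ → ℝ} (hg : ContDiff ℝ 2 g) (α β a b : ℝ) :
    ∫ x in a..b, deriv (deriv g) x * (α + β * x) =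
      (α + β * b) * deriv g b - (α + β * a) * deriv g a - β * (g b - g a) := by
  have hg' : ContDiff ℝ 1 (deriv g) := hg.deriv'
  have hparts := integral_mul_deriv_eq_deriv_mul (a := a) (b := b) (u := fun x => α + β * x)
    (u' := fun _ => β)
    (fun x _ => ((hasDerivAt_id x).const_mul β).const_add α |>.congr_deriv (mul_one β))
    (fun x _ => (hg'.differentiable one_ne_zero x).hasDerivAt) intervalIntegrable_const
    ((hg'.continuous_deriv le_rfl).intervalIntegrable a b)
  simp_rw [mul_comm (deriv (deriv g) _)]
  rw [hparts, intervalIntegral.integral_const_mul, integral_deriv_eq_sub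
    (fun x _ => hg.differentiable two_ne_zero x)
    ((hg.continuous_deriv one_le_two).intervalIntegrable a b)]

def IsCubic (g : ℝ → ℝ) : Prop :=
  ∃ p₀ p₁ p₂ p₃ : ℝ, g = fun t => p₀ + p₁ * t + p₂ * t ^ 2 + p₃ * t ^ 3

lemma IsCubic.sub {g₁ g₂ : ℝ → ℝ} (h₁ : IsCubic g₁) (h₂ : IsCubic g₂) :
    IsCubic fun t => g₁ t - g₂ t := by
  obtain ⟨p₀, p₁, p₂, p₃, rfl⟩ := h₁
  obtain ⟨q₀, q₁, q₂, q₃, rfl⟩ := h₂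
  exact ⟨p₀ - q₀, p₁ - q₁, p₂ - q₂, p₃ - q₃, by ext t; ring⟩

lemma IsCubic.integral_eq_correctedTrapezoid {g : ℝ → ℝ} (hg : IsCubic g) (a b : ℝ) :
    ∫ t in a..b, g t =
      (b - a) / 2 * (g a + g b) - (b - a) ^ 2 / 12 * (deriv g b - deriv g a) := by
  obtain ⟨p₀, p₁, p₂, p₃, rfl⟩ := hg
  rw [integral_deriv_eq_sub' (fun t => p₀ * t + p₁ / 2 * t ^ 2 + p₂ / 3 * t ^ 3 + p₃ / 4 * t ^ 4)
    (by ext t; simp (disch := fun_prop); ring) (fun _ _ => by fun_prop) (by fun_prop)]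
  simp (disch := fun_prop)
  ring

section InterpolationError

variable {w : ℝ → ℝ → ℝ} {a b c d : ℝ}

theorem integral_integral_pd1_pd1_mul_affine (hw : ContDiff ℝ 3 (uncurry w))
    (hcubic : IsCubic fun y => w b y - w a y)
    (hcorner : ∀ s ∈ ({a, b} : Set ℝ), ∀ t ∈ ({c, d} : Set ℝ), w s t = 0)
    (hedge : ∀ s ∈ ({a, b} : Set ℝ), ∫ t in c..d, pd1 w s t = 0) (α β : ℝ) :
    ∫ x in a..b, ∫ y in c..d, pd1 (pd1 w) x y * (α + β * x) =
      (d - c) ^ 2 / 12 * ∫ x in a..b, ∫ y in c..d, pd1 (pd2 (pd2 w)) x y * β := by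
  have hw1 : ContDiff ℝ 1 (uncurry w) := hw.of_le (by norm_num)
  have hpd1 : Continuous (uncurry (pd1 w)) := (hw.uncurry_pd1 (n := 2)).continuous
  have hpd1a : Continuous (pd1 w a) := hpd1.uncurry_left a
  have hpd1b : Continuous (pd1 w b) := hpd1.uncurry_left b
  have hwa : Continuous (w a) := hw.continuous.uncurry_left a
  have hwb : Continuous (w b) := hw.continuous.uncurry_left b
  set ψ : ℝ → ℝ := fun y => w b y - w a y
  have hψ' (y : ℝ) : deriv ψ y = pd2 w b y - pd2 w a y :=
    ((hasDerivAt_pd2 hw1 b y).sub (hasDerivAt_pd2 hw1 a y)).deriv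
  have hψc : ψ c = 0 := by simp [ψ, hcorner]
  have hψd : ψ d = 0 := by simp [ψ, hcorner]
  calc ∫ x in a..b, ∫ y in c..d, pd1 (pd1 w) x y * (α + β * x)
      = ∫ y in c..d, ∫ x in a..b, pd1 (pd1 w) x y * (α + β * x) :=
        integral_integral_swap_of_continuous
          (((hw.uncurry_pd1 (n := 2)).uncurry_pd1 (n := 1)).continuous.mul (by fun_prop))
    _ = ∫ y in c..d, ((α + β * b) * pd1 w b y - (α + β * a) * pd1 w a y - β * ψ y) :=
        intervalIntegral.integral_congr fun y _ =>
          integral_deriv_deriv_mul_affine (hw.uncurry_right y |>.of_le (by norm_num)) α β a b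
    _ = (α + β * b) * (∫ y in c..d, pd1 w b y) - (α + β * a) * (∫ y in c..d, pd1 w a y)
          - β * ∫ y in c..d, ψ y := by
        rw [intervalIntegral.integral_sub, intervalIntegral.integral_sub,
          intervalIntegral.integral_const_mul, intervalIntegral.integral_const_mul,
          intervalIntegral.integral_const_mul]
        all_goals exact Continuous.intervalIntegrable (by fun_prop) c d
    _ = β * ((d - c) ^ 2 / 12 * (deriv ψ d - deriv ψ c)) := by
        rw [hedge a (by simp), hedge b (by simp), hcubic.integral_eq_correctedTrapezoid, hψc, hψd]
        ring
    _ = (d - c) ^ 2 / 12 * ∫ x in a..b, ∫ y in c..d, pd1 (pd2 (pd2 w)) x y * β := by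
        simp_rw [intervalIntegral.integral_mul_const]
        rw [integral_integral_pd1_pd2 hw.uncurry_pd2, hψ', hψ']
        ring

theorem integral_integral_pd2_pd2_mul_affine (hw : ContDiff ℝ 3 (uncurry w))
    (hcubic : IsCubic fun x => w x d - w x c)
    (hcorner : ∀ s ∈ ({a, b} : Set ℝ), ∀ t ∈ ({c, d} : Set ℝ), w s t = 0)
    (hedge : ∀ t ∈ ({c, d} : Set ℝ), ∫ s in a..b, pd2 w s t = 0) (γ δ : ℝ) :
    ∫ x in a..b, ∫ y in c..d, pd2 (pd2 w) x y * (γ + δ * y) =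
      (b - a) ^ 2 / 12 * ∫ x in a..b, ∫ y in c..d, pd2 (pd1 (pd1 w)) x y * δ := by
  rw [integral_integral_swap_of_continuous (F := fun x y => pd2 (pd2 w) x y * (γ + δ * y))
      (((hw.uncurry_pd2 (n := 2)).uncurry_pd2 (n := 1)).continuous.mul (by fun_prop)),
    integral_integral_swap_of_continuous (F := fun x y => pd2 (pd1 (pd1 w)) x y * δ)
      ((((hw.uncurry_pd1 (n := 2)).uncurry_pd1 (n := 1)).uncurry_pd2 (n := 0)).continuous.mul
        continuous_const)]
  exact integral_integral_pd1_pd1_mul_affine (w := flip w) hw.uncurry_flip hcubic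
    (fun t ht s hs => hcorner s hs t ht) hedge γ δ

end InterpolationError

lemma MemP4.contDiff {u : ℝ → ℝ → ℝ} (hu : MemP4 u) (n : WithTop ℕ∞) :
    ContDiff ℝ n (uncurry u) := by
  obtain ⟨c, -, hc⟩ := hu
  rw [show uncurry u = fun p => ∑ i : Fin 5, ∑ j : Fin 5, c i j * p.1 ^ (i : ℕ) * p.2 ^ (j : ℕ)
    from funext fun p => hc p.1 p.2]
  fun_prop

lemma MemPT2.contDiff {v : ℝ → ℝ → ℝ} (hv : MemPT2 v) (n : WithTop ℕ∞) :
    ContDiff ℝ n (uncurry v) := by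
  obtain ⟨a₀, a₁, a₂, a₃, a₄, a₅, b₁, b₂, hv⟩ := hv
  rw [show uncurry v = fun p => a₀ + a₁ * p.1 + a₂ * p.2 + a₃ * p.1 ^ 2 + a₄ * p.1 * p.2
    + a₅ * p.2 ^ 2 + b₁ * p.1 ^ 3 + b₂ * p.2 ^ 3 from funext fun p => hv p.1 p.2]
  fun_prop

lemma MemP4.flip {u : ℝ → ℝ → ℝ} (hu : MemP4 u) : MemP4 (flip u) := by
  obtain ⟨c, hc0, hc⟩ := hu
  refine ⟨fun i j => c j i, fun i j hij => hc0 j i (by omega), fun x y => ?_⟩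
  show u y x = _
  rw [hc, Finset.sum_comm]
  simp only [mul_right_comm]

lemma MemPT2.flip {v : ℝ → ℝ → ℝ} (hv : MemPT2 v) : MemPT2 (flip v) := by
  obtain ⟨a₀, a₁, a₂, a₃, a₄, a₅, b₁, b₂, hv⟩ := hv
  exact ⟨a₀, a₂, a₁, a₅, a₄, a₃, b₂, b₁, fun x y => by show v y x = _; rw [hv]; ring⟩

lemma MemP4.isCubic_sub {u : ℝ → ℝ → ℝ} (hu : MemP4 u) (a b : ℝ) :
    IsCubic fun y => u b y - u a y := by
  obtain ⟨c, hc0, hc⟩ := hu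
  refine ⟨∑ i : Fin 5, c i 0 * (b ^ (i : ℕ) - a ^ (i : ℕ)),
    ∑ i : Fin 5, c i 1 * (b ^ (i : ℕ) - a ^ (i : ℕ)),
    ∑ i : Fin 5, c i 2 * (b ^ (i : ℕ) - a ^ (i : ℕ)),
    ∑ i : Fin 5, c i 3 * (b ^ (i : ℕ) - a ^ (i : ℕ)), ?_⟩
  ext y
  simp [hc, Fin.sum_univ_five, hc0 1 4 (by decide), hc0 2 4 (by decide), hc0 3 4 (by decide),
    hc0 4 4 (by decide)]
  ring

lemma MemPT2.isCubic_sub {v : ℝ → ℝ → ℝ} (hv : MemPT2 v) (a b : ℝ) :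
    IsCubic fun y => v b y - v a y := by
  obtain ⟨a₀, a₁, a₂, a₃, a₄, a₅, b₁, b₂, hv⟩ := hv
  exact ⟨a₁ * (b - a) + a₃ * (b ^ 2 - a ^ 2) + b₁ * (b ^ 3 - a ^ 3), a₄ * (b - a), 0, 0,
    by ext y; rw [hv, hv]; ring⟩

lemma isCubic_sub_of_memP4_of_memPT2 {u P : ℝ → ℝ → ℝ} (hu : MemP4 u) (hP : MemPT2 P) (a b : ℝ) :
    IsCubic fun y => (u b y - P b y) - (u a y - P a y) := by
  convert (hu.isCubic_sub a b).sub (hP.isCubic_sub a b) using 2 with y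
  ring

lemma MemPT2.exists_hessian_eq {v : ℝ → ℝ → ℝ} (hv : MemPT2 v) :
    ∃ α β γ δ e : ℝ, pd1 (pd1 v) = (fun x _ => α + β * x) ∧ pd2 (pd1 v) = (fun _ _ => e) ∧
      pd1 (pd2 v) = (fun _ _ => e) ∧ pd2 (pd2 v) = (fun _ y => γ + δ * y) := by
  obtain ⟨a₀, a₁, a₂, a₃, a₄, a₅, b₁, b₂, hv⟩ := hv
  obtain rfl : v = _ := funext₂ hv
  refine ⟨2 * a₃, 6 * b₁, 2 * a₅, 6 * b₂, a₄, ?_, ?_, ?_, ?_⟩ <;> ext x y <;>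
    simp (disch := fun_prop) [pd1, pd2] <;> ring

lemma pd1_pd2_pd2_sub_of_memPT2 {u P : ℝ → ℝ → ℝ} (hu : ContDiff ℝ 2 (uncurry u)) (hP : MemPT2 P) :
    pd1 (pd2 (pd2 fun x y => u x y - P x y)) = pd1 (pd2 (pd2 u)) := by
  obtain ⟨_, _, γ, δ, _, -, -, -, hP22⟩ := hP.exists_hessian_eq
  rw [pd2_sub (hu.of_le (by norm_num)) (hP.contDiff 1),
    pd2_sub (hu.uncurry_pd2 (n := 1)) (hP.contDiff 2).uncurry_pd2, hP22]
  ext x y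
  simp [pd1]

lemma pd2_pd1_pd1_sub_of_memPT2 {u P : ℝ → ℝ → ℝ} (hu : ContDiff ℝ 2 (uncurry u)) (hP : MemPT2 P) :
    pd2 (pd1 (pd1 fun x y => u x y - P x y)) = pd2 (pd1 (pd1 u)) :=
  congrArg flip (pd1_pd2_pd2_sub_of_memPT2 hu.uncurry_flip hP.flip)

theorem integral_integral_hessian_inner_of_memPT2 {w v : ℝ → ℝ → ℝ} {a b c d : ℝ}
    (hw : ContDiff ℝ 3 (uncurry w)) (hv : MemPT2 v)
    (hcubic₁ : IsCubic fun y => w b y - w a y) (hcubic₂ : IsCubic fun x => w x d - w x c)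
    (hcorner : ∀ s ∈ ({a, b} : Set ℝ), ∀ t ∈ ({c, d} : Set ℝ), w s t = 0)
    (hedge₁ : ∀ s ∈ ({a, b} : Set ℝ), ∫ t in c..d, pd1 w s t = 0)
    (hedge₂ : ∀ t ∈ ({c, d} : Set ℝ), ∫ s in a..b, pd2 w s t = 0) :
    ∫ x in a..b, ∫ y in c..d,
      (pd1 (pd1 w) x y * pd1 (pd1 v) x y + pd2 (pd1 w) x y * pd2 (pd1 v) x y
        + pd1 (pd2 w) x y * pd1 (pd2 v) x y + pd2 (pd2 w) x y * pd2 (pd2 v) x y) =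
      (d - c) ^ 2 / 12 * (∫ x in a..b, ∫ y in c..d, pd1 (pd2 (pd2 w)) x y * pd1 (pd1 (pd1 v)) x y)
        + (b - a) ^ 2 / 12 *
          ∫ x in a..b, ∫ y in c..d, pd2 (pd1 (pd1 w)) x y * pd2 (pd2 (pd2 v)) x y := by
  obtain ⟨α, β, γ, δ, e, hv11, hv21, hv12, hv22⟩ := hv.exists_hessian_eq
  have hv111 : pd1 (pd1 (pd1 v)) = fun _ _ => β := by rw [hv11]; ext; simp [pd1]
  have hv222 : pd2 (pd2 (pd2 v)) = fun _ _ => δ := by rw [hv22]; ext; simp [pd2]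
  have hc11 : Continuous fun p : ℝ × ℝ => pd1 (pd1 w) p.1 p.2 :=
    ((hw.uncurry_pd1 (n := 2)).uncurry_pd1 (n := 1)).continuous
  have hc21 : Continuous fun p : ℝ × ℝ => pd2 (pd1 w) p.1 p.2 :=
    ((hw.uncurry_pd1 (n := 2)).uncurry_pd2 (n := 1)).continuous
  have hc12 : Continuous fun p : ℝ × ℝ => pd1 (pd2 w) p.1 p.2 :=
    ((hw.uncurry_pd2 (n := 2)).uncurry_pd1 (n := 1)).continuous
  have hc22 : Continuous fun p : ℝ × ℝ => pd2 (pd2 w) p.1 p.2 :=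
    ((hw.uncurry_pd2 (n := 2)).uncurry_pd2 (n := 1)).continuous
  rw [hv111, hv222]
  simp only [hv11, hv21, hv12, hv22]
  rw [integral_integral_add_of_continuous, integral_integral_add_of_continuous,
    integral_integral_add_of_continuous,
    integral_integral_pd1_pd1_mul_affine hw hcubic₁ hcorner hedge₁,
    integral_integral_pd2_pd2_mul_affine hw hcubic₂ hcorner hedge₂]
  · simp_rw [intervalIntegral.integral_mul_const]
    rw [integral_integral_pd2_pd1 (hw.of_le (by norm_num)),
      integral_integral_pd1_pd2 (hw.of_le (by norm_num))]
    simp [hcorner]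
  all_goals fun_prop

/-- For u ∈ P₄(K), v ∈ P_T(K) and the rectangular Morley interpolation Π_K, the
Frobenius inner product of the Hessians satisfies
∫_K ∇²(u-Π_K u):∇²v = (h²/3)[∫_K ∂³u/∂x₁∂x₂²·∂³v/∂x₁³ + ∫_K ∂³u/∂x₁²∂x₂·∂³v/∂x₂³]. -/
theorem stmt15 (h x₁c x₂c : ℝ) (hh : 0 < h)
    (u Pu v : ℝ → ℝ → ℝ) (hu : MemP4 u) (hPu : MemPT2 Pu) (hv : MemPT2 v)
    (hvtx : ∀ s ∈ ({x₁c - h, x₁c + h} : Set ℝ), ∀ t ∈ ({x₂c - h, x₂c + h} : Set ℝ),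
      Pu s t = u s t)
    (hedge1 : ∀ s ∈ ({x₁c - h, x₁c + h} : Set ℝ),
      (∫ t in Icc (x₂c - h) (x₂c + h), pd1 Pu s t) =
        ∫ t in Icc (x₂c - h) (x₂c + h), pd1 u s t)
    (hedge2 : ∀ t ∈ ({x₂c - h, x₂c + h} : Set ℝ),
      (∫ s in Icc (x₁c - h) (x₁c + h), pd2 Pu s t) =
        ∫ s in Icc (x₁c - h) (x₁c + h), pd2 u s t) :
    (∫ x in Icc (x₁c - h) (x₁c + h), ∫ y in Icc (x₂c - h) (x₂c + h),
      (pd1 (pd1 (fun s t => u s t - Pu s t)) x y * pd1 (pd1 v) x y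
        + pd2 (pd1 (fun s t => u s t - Pu s t)) x y * pd2 (pd1 v) x y
        + pd1 (pd2 (fun s t => u s t - Pu s t)) x y * pd1 (pd2 v) x y
        + pd2 (pd2 (fun s t => u s t - Pu s t)) x y * pd2 (pd2 v) x y)) =
    (h ^ 2 / 3) *
      ((∫ x in Icc (x₁c - h) (x₁c + h), ∫ y in Icc (x₂c - h) (x₂c + h),
          pd1 (pd2 (pd2 u)) x y * pd1 (pd1 (pd1 v)) x y)
        + ∫ x in Icc (x₁c - h) (x₁c + h), ∫ y in Icc (x₂c - h) (x₂c + h),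
          pd2 (pd1 (pd1 u)) x y * pd2 (pd2 (pd2 v)) x y) := by
  simp only [integral_Icc_eq_intervalIntegral (by linarith : x₁c - h ≤ x₁c + h),
    integral_Icc_eq_intervalIntegral (by linarith : x₂c - h ≤ x₂c + h)] at hedge1 hedge2 ⊢
  have hedge₁ : ∀ s ∈ ({x₁c - h, x₁c + h} : Set ℝ),
      ∫ t in x₂c - h..x₂c + h, pd1 (fun s t => u s t - Pu s t) s t = 0 := fun s hs => by
    rw [integral_pd1_sub (hu.contDiff 1) (hPu.contDiff 1), hedge1 s hs, sub_self]
  have hedge₂ : ∀ t ∈ ({x₂c - h, x₂c + h} : Set ℝ),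
      ∫ s in x₁c - h..x₁c + h, pd2 (fun s t => u s t - Pu s t) s t = 0 := fun t ht => by
    rw [integral_pd2_sub (hu.contDiff 1) (hPu.contDiff 1), hedge2 t ht, sub_self]
  rw [integral_integral_hessian_inner_of_memPT2 (w := fun s t => u s t - Pu s t)
      ((hu.contDiff 3).sub (hPu.contDiff 3)) hv (isCubic_sub_of_memP4_of_memPT2 hu hPu _ _)
      (isCubic_sub_of_memP4_of_memPT2 hu.flip hPu.flip _ _)
      (fun s hs t ht => sub_eq_zero.2 (hvtx s hs t ht).symm) hedge₁ hedge₂,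
    pd1_pd2_pd2_sub_of_memPT2 (hu.contDiff 2) hPu, pd2_pd1_pd1_sub_of_memPT2 (hu.contDiff 2) hPu]
  ring
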